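/- arXiv:2502.20063 — 2 statements merged into one kernel-verified Lean document; each statement's English description precedes it below -/
import Mathlib

section
/- The function P(K) = ∫₀¹ (Σ_{j=1}^{M(s;K)} U_j(s)) φ(s) ds is an exact potential for the game: for every firm i, every pair of feasible strategies K_i and K'_i, and every fixed profile K_{-i} of the other firms' strategies, u_i(K_i, K_{-i}) − u_i(K'_i, K_{-i}) = P(K_i, K_{-i}) − P(K'_i, K_{-i}). -/
open MeasureTheory Set Filter Topology

noncomputable section

/-- The measure of a set `A` under the score density `φ`. -/
def dMeas (φ : ℝ → ℝ) (A : Set ℝ) : ℝ := ∫ s in A, φ s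

/-- `K` is a finite union of closed intervals. -/
def FinUnionIntervals (K : Set ℝ) : Prop :=
  ∃ (n : ℕ) (a b : Fin n → ℝ), K = ⋃ i, Set.Icc (a i) (b i)

/-- A feasible strategy: a finite union of closed intervals inside `[0,1]`
with `φ`-measure at most the capacity `c`. -/
def Feasible (φ : ℝ → ℝ) (c : ℝ) (K : Set ℝ) : Prop :=
  K ⊆ Set.Icc (0:ℝ) 1 ∧ FinUnionIntervals K ∧ dMeas φ K ≤ c

/-- `M(s;K)`: the number of firms interviewing an applicant with score `s`. -/
def numFirms {N : ℕ} (K : Fin N → Set ℝ) (s : ℝ) : ℕ :=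
  Nat.card {i : Fin N // s ∈ K i}

/-- `Mmax(K)`: the maximal congestion over scores in `[0,1]`. -/
def maxFirms {N : ℕ} (K : Fin N → Set ℝ) : ℕ :=
  sSup ((fun s => numFirms K s) '' Set.Icc (0:ℝ) 1)

/-- Firm `i`'s expected utility under the profile `K`. -/
def utility (φ : ℝ → ℝ) (U : ℕ → ℝ → ℝ) {N : ℕ} (K : Fin N → Set ℝ) (i : Fin N) : ℝ :=
  ∫ s in K i, U (numFirms K s) s * φ s

/-- Social welfare: the total utility of all firms. -/
def SW (φ : ℝ → ℝ) (U : ℕ → ℝ → ℝ) {N : ℕ} (K : Fin N → Set ℝ) : ℝ :=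
  ∑ i, utility φ U K i

/-- Nash equilibrium: every strategy is feasible and no firm can strictly
increase its utility by a unilateral feasible deviation. -/
def NashEq (φ : ℝ → ℝ) (c : ℝ) (U : ℕ → ℝ → ℝ) {N : ℕ} (K : Fin N → Set ℝ) : Prop :=
  (∀ i, Feasible φ c (K i)) ∧
  ∀ (i : Fin N) (K' : Set ℝ), Feasible φ c K' →
    utility φ U (Function.update K i K') i ≤ utility φ U K i

/-- Correlated decision rule: `U_n(s) = s / n`. -/
def Ucorr : ℕ → ℝ → ℝ := fun n s => s / n

/-- Independent decision rule: `U_n(s) = (1 - (1-s)^n) / n`. -/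
def Uindep : ℕ → ℝ → ℝ := fun n s => (1 - (1 - s) ^ n) / n

/-- The potential function `P(K) = ∫₀¹ (Σ_{j=1}^{M(s;K)} U_j(s)) φ(s) ds`. -/
def potential (φ : ℝ → ℝ) (U : ℕ → ℝ → ℝ) {N : ℕ} (K : Fin N → Set ℝ) : ℝ :=
  ∫ s in Set.Icc (0:ℝ) 1, (∑ j ∈ Finset.Icc 1 (numFirms K s), U j s) * φ s

/-! Write `m(s)` for the number of firms other than `i` interviewing score `s`. Then
`M(s; K_i, K_{-i}) = m(s) + 1_{K_i}(s)`, so the integrand of `P` splits as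
`Σ_{j ≤ m(s)} U_j(s) φ(s) + 1_{K_i}(s) U_{m(s)+1}(s) φ(s)`. The first summand integrates to
`P(∅, K_{-i})` and the second to `u_i(K_i, K_{-i})`, hence
`P(K_i, K_{-i}) = P(∅, K_{-i}) + u_i(K_i, K_{-i})` and the differences agree. Both summands are
integrable because `m` takes finitely many values and each `U_n` is bounded on `[0,1]`. -/

theorem FinUnionIntervals.measurableSet {K : Set ℝ} (hK : FinUnionIntervals K) :
    MeasurableSet K := by
  obtain ⟨n, a, b, rfl⟩ := hK
  exact .iUnion fun _ => measurableSet_Icc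

section IndexedFamily

variable {α : Type*}

theorem MeasureTheory.AEStronglyMeasurable.apply_index [MeasurableSpace α] {μ : Measure α}
    {β : Type*} [TopologicalSpace β] [TopologicalSpace.PseudoMetrizableSpace β]
    {g : ℕ → α → β} {n : α → ℕ}
    (hg : ∀ k, AEStronglyMeasurable (g k) μ) (hn : Measurable n) :
    AEStronglyMeasurable (fun x => g (n x) x) μ := by
  refine ⟨fun x => (hg (n x)).mk _ x, ?_, ?_⟩
  · have hmk : StronglyMeasurable (Function.uncurry fun k => (hg k).mk (g k)) :=
      stronglyMeasurable_uncurry_of_continuous_of_stronglyMeasurable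
        (fun _ => continuous_of_discreteTopology) fun k => (hg k).stronglyMeasurable_mk
    exact hmk.comp_measurable (hn.prodMk measurable_id)
  · filter_upwards [ae_all_iff.2 fun k => (hg k).ae_eq_mk] with x hx using hx (n x)

theorem IsCompact.exists_bound_of_continuousOn_index [TopologicalSpace α] {β : Type*}
    [SeminormedAddCommGroup β] {g : ℕ → α → β} {S : Set α} (hS : IsCompact S)
    (hg : ∀ k, ContinuousOn (g k) S) (N : ℕ) :
    ∃ C, ∀ k ≤ N, ∀ x ∈ S, ‖g k x‖ ≤ C := by
  have hcont : ContinuousOn (Function.uncurry g) (Iic N ×ˢ S) :=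
    continuousOn_prod_of_discrete_left.2 fun k => (hg k).mono fun x hx => hx.2
  obtain ⟨C, hC⟩ := ((finite_Iic N).isCompact.prod hS).exists_bound_of_continuousOn hcont
  exact ⟨C, fun k hk x hx => hC (k, x) ⟨hk, hx⟩⟩

theorem MeasureTheory.IntegrableOn.apply_index_mul [MeasurableSpace α] {μ : Measure α}
    [TopologicalSpace α] [OpensMeasurableSpace α]
    {g : ℕ → α → ℝ} {n : α → ℕ} {φ : α → ℝ} {S : Set α} {N : ℕ}
    (hφ : IntegrableOn φ S μ) (hS : IsCompact S) (hSm : MeasurableSet S)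
    (hg : ∀ k, ContinuousOn (g k) S) (hn : Measurable n) (hnN : ∀ x, n x ≤ N) :
    IntegrableOn (fun x => g (n x) x * φ x) S μ := by
  obtain ⟨C, hC⟩ := hS.exists_bound_of_continuousOn_index hg N
  refine hφ.bdd_mul (c := C) (.apply_index (fun k => (hg k).aestronglyMeasurable hSm) hn) ?_
  exact (ae_restrict_iff' hSm).2 (.of_forall fun x hx => hC _ (hnN x) x hx)

end IndexedFamily

section HiringGame

variable {N : ℕ}

theorem numFirms_eq_sum (K : Fin N → Set ℝ) (s : ℝ) :
    numFirms K s = ∑ j, (K j).indicator 1 s := by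
  classical
  rw [numFirms, Nat.card_eq_fintype_card, Fintype.card_subtype, Finset.card_filter]
  simp only [indicator_apply, Pi.one_apply]

theorem numFirms_le (K : Fin N → Set ℝ) (s : ℝ) : numFirms K s ≤ N :=
  (Finite.card_subtype_le _).trans (Nat.card_fin N).le

theorem measurable_numFirms {K : Fin N → Set ℝ} (hK : ∀ j, MeasurableSet (K j)) :
    Measurable (numFirms K) := by
  simp_rw [funext (numFirms_eq_sum K)]
  exact Finset.measurable_sum _ fun j _ => measurable_const.indicator (hK j)

theorem numFirms_update (K : Fin N → Set ℝ) (i : Fin N) (A : Set ℝ) (s : ℝ) :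
    numFirms (Function.update K i A) s =
      numFirms (Function.update K i ∅) s + A.indicator 1 s := by
  classical
  have key : ∀ B : Set ℝ, numFirms (Function.update K i B) s =
      B.indicator 1 s + ∑ j ∈ Finset.univ \ {i}, (K j).indicator 1 s := by
    intro B
    rw [numFirms_eq_sum, ← Finset.sum_update_of_mem (Finset.mem_univ i)]
    exact Finset.sum_congr rfl fun j _ => by
      rcases eq_or_ne j i with rfl | hj <;> simp [*]
  rw [key, key, indicator_empty, zero_add, add_comm]

theorem potential_update_eq_add_utility {φ : ℝ → ℝ} {U : ℕ → ℝ → ℝ}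
    (hφ : IntegrableOn φ (Icc 0 1)) (hU : ∀ n, 1 ≤ n → ContinuousOn (U n) (Icc 0 1))
    {K : Fin N → Set ℝ} (hK : ∀ j, MeasurableSet (K j)) (i : Fin N) {A : Set ℝ}
    (hA : MeasurableSet A) (hA01 : A ⊆ Icc 0 1) :
    potential φ U (Function.update K i A) =
      potential φ U (Function.update K i ∅) + utility φ U (Function.update K i A) i := by
  set m := numFirms (Function.update K i ∅)
  have hm : Measurable m := measurable_numFirms fun j => by
    rcases eq_or_ne j i with rfl | hj
    · simp
    · simpa [hj] using hK j
  have hG : IntegrableOn (fun s => (∑ j ∈ Finset.Icc 1 (m s), U j s) * φ s) (Icc 0 1) :=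
    hφ.apply_index_mul (g := fun k s => ∑ j ∈ Finset.Icc 1 k, U j s) isCompact_Icc
      measurableSet_Icc
      (fun k => continuousOn_finsetSum _ fun j hj => hU j (Finset.mem_Icc.1 hj).1) hm
      (numFirms_le _)
  have hF : IntegrableOn (fun s => U (m s + 1) s * φ s) (Icc 0 1) :=
    hφ.apply_index_mul (g := fun k => U (k + 1)) isCompact_Icc measurableSet_Icc
      (fun k => hU _ k.succ_pos) hm (numFirms_le _)
  have hsplit : ∀ s, (∑ j ∈ Finset.Icc 1 (numFirms (Function.update K i A) s), U j s) * φ s =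
      (∑ j ∈ Finset.Icc 1 (m s), U j s) * φ s +
        A.indicator (fun s => U (m s + 1) s * φ s) s := by
    intro s
    rw [numFirms_update K i A s]
    by_cases hs : s ∈ A
    · simp [m, hs, Finset.sum_Icc_succ_top, add_mul]
    · simp [m, hs]
  have hutil : utility φ U (Function.update K i A) i =
      ∫ s in Icc 0 1, A.indicator (fun s => U (m s + 1) s * φ s) s := by
    rw [setIntegral_indicator hA, inter_eq_self_of_subset_right hA01, utility,
      Function.update_self]
    exact setIntegral_congr_fun hA fun s hs => by simp [numFirms_update K i A s, hs, m]
  rw [hutil, potential, potential, ← integral_add hG (hF.indicator hA)]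
  simp only [hsplit]

end HiringGame

theorem exact_potential_general
    {N : ℕ} (φ : ℝ → ℝ)
    (hφint : ∫ s in Set.Icc (0:ℝ) 1, φ s = 1)
    (c : ℝ)
    (U : ℕ → ℝ → ℝ)
    (hUcont : ∀ n, 1 ≤ n → ContinuousOn (U n) (Set.Icc 0 1))
    (K : Fin N → Set ℝ) (hK : ∀ j, Feasible φ c (K j))
    (i : Fin N) (Ki Ki' : Set ℝ) (hKi : Feasible φ c Ki) (hKi' : Feasible φ c Ki') :
    utility φ U (Function.update K i Ki) i - utility φ U (Function.update K i Ki') i =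
      potential φ U (Function.update K i Ki) - potential φ U (Function.update K i Ki') := by
  have hφ : IntegrableOn φ (Icc 0 1) := .of_integral_ne_zero (by rw [hφint]; exact one_ne_zero)
  have hKm : ∀ j, MeasurableSet (K j) := fun j => (hK j).2.1.measurableSet
  rw [potential_update_eq_add_utility hφ hUcont hKm i hKi.2.1.measurableSet hKi.1,
    potential_update_eq_add_utility hφ hUcont hKm i hKi'.2.1.measurableSet hKi'.1]
  ring

/-- **Theorem (exact potential).**
`P` is an exact potential for the hiring game: for every firm `i`, every pair of
feasible strategies `Ki`, `Ki'`, and every fixed feasible profile of the other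
firms' strategies, the change in firm `i`'s utility equals the change in `P`. -/
theorem exact_potential
    {N : ℕ} (hN : 2 ≤ N) (φ : ℝ → ℝ)
    (hφm : Measurable φ) (hφpos : ∀ s ∈ Set.Icc (0:ℝ) 1, 0 < φ s)
    (hφint : ∫ s in Set.Icc (0:ℝ) 1, φ s = 1)
    (c : ℝ) (hc : 0 < c) (hc1 : c ≤ 1)
    (U : ℕ → ℝ → ℝ)
    (hU0 : ∀ n, 1 ≤ n → U n 0 = 0)
    (hUcont : ∀ n, 1 ≤ n → ContinuousOn (U n) (Set.Icc 0 1))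
    (hUmono : ∀ n, 1 ≤ n → StrictMonoOn (U n) (Set.Icc 0 1))
    (hUdec : ∀ n m, 1 ≤ n → n < m → ∀ s : ℝ, 0 < s → s ≤ 1 → U m s < U n s)
    (K : Fin N → Set ℝ) (hK : ∀ j, Feasible φ c (K j))
    (i : Fin N) (Ki Ki' : Set ℝ) (hKi : Feasible φ c Ki) (hKi' : Feasible φ c Ki') :
    utility φ U (Function.update K i Ki) i - utility φ U (Function.update K i Ki') i =
      potential φ U (Function.update K i Ki) - potential φ U (Function.update K i Ki') :=
  exact_potential_general φ hφint c U hUcont K hK i Ki Ki' hKi hKi'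
end
end

section
/- For each positive integer m and t ∈ [0, 1/m], define τ_m(t) = 1 − (1 − m·t)^{1/m}. Then: (i) for each fixed m, the function t ↦ τ_m(t) is strictly increasing on [0, 1/m]; and (ii) for each fixed integer n ≥ 1, the difference τ_{n+1}(t) − τ_n(t) = (1 − n·t)^{1/n} − (1 − (n+1)·t)^{1/(n+1)} is strictly increasing in t on [0, 1/(n+1)). -/
/-!
Writing `g_c(t) = (1 - c t)^{1/c}`, one has `g_c' = -(1 - c t)^{1/c - 1}`, so `g_c` is strictly
decreasing. For `1 ≤ c < d` and `0 < t < 1/d`, the base `1 - d t < 1 - c t` is smaller and lies in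
`(0, 1)`, while the exponent `1/d - 1 < 1/c - 1 ≤ 0` is more negative, so `|g_d'| > |g_c'|`, i.e.
`g_c - g_d` has positive derivative.
-/

open Set

variable {c d t : ℝ}

theorem hasDerivAt_one_sub_mul_rpow_one_div (hc : c ≠ 0) (ht : 1 - c * t ≠ 0) :
    HasDerivAt (fun t : ℝ => (1 - c * t) ^ (1 / c)) (-((1 - c * t) ^ (1 / c - 1))) t := by
  have h := (Real.hasDerivAt_rpow_const (p := 1 / c) (Or.inl ht)).comp t
    (((hasDerivAt_id t).const_mul c).const_sub 1)
  exact h.congr_deriv (by field_simp)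

theorem strictAntiOn_one_sub_mul_rpow_one_div (hc : 0 < c) :
    StrictAntiOn (fun t : ℝ => (1 - c * t) ^ (1 / c)) (Iic (1 / c)) := by
  intro s _ t ht hst
  have ht' : 0 ≤ 1 - c * t := by
    rw [mem_Iic, le_div_iff₀ hc] at ht
    linarith
  exact Real.rpow_lt_rpow ht' (by nlinarith) (by positivity)

theorem Real.rpow_lt_rpow_of_le_of_exponent_lt {x y a b : ℝ} (hy₀ : 0 < y) (hy₁ : y < 1)
    (hyx : y ≤ x) (ha : a ≤ 0) (hba : b < a) : x ^ a < y ^ b :=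
  (Real.rpow_le_rpow_of_nonpos hy₀ hyx ha).trans_lt (Real.rpow_lt_rpow_of_exponent_gt hy₀ hy₁ hba)

theorem strictMonoOn_one_sub_mul_rpow_one_div_sub (hc : 1 ≤ c) (hcd : c < d) :
    StrictMonoOn (fun t : ℝ => (1 - c * t) ^ (1 / c) - (1 - d * t) ^ (1 / d)) (Ico 0 (1 / d)) := by
  have hc₀ : 0 < c := one_pos.trans_le hc
  have hd₀ : 0 < d := hc₀.trans hcd
  apply strictMonoOn_of_deriv_pos (convex_Ico 0 (1 / d))
  · refine ContinuousOn.sub ?_ ?_ <;>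
      exact (Continuous.rpow_const (by fun_prop) fun _ => Or.inr (by positivity)).continuousOn
  · intro t ht
    rw [interior_Ico, mem_Ioo, lt_div_iff₀ hd₀] at ht
    have hdt : 0 < 1 - d * t := by linarith
    have hdc : 1 - d * t < 1 - c * t := by nlinarith
    have hderiv := (hasDerivAt_one_sub_mul_rpow_one_div hc₀.ne' (hdt.trans hdc).ne').fun_sub
      (hasDerivAt_one_sub_mul_rpow_one_div hd₀.ne' hdt.ne')
    rw [hderiv.deriv, neg_sub_neg, sub_pos]
    refine Real.rpow_lt_rpow_of_le_of_exponent_lt hdt (by nlinarith) hdc.le ?_ ?_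
    · rw [sub_nonpos, div_le_one hc₀]
      exact hc
    · exact sub_lt_sub_right (one_div_lt_one_div_of_lt hc₀ hcd) 1

/-- **Lemma (monotonicity of the independent-rule thresholds).**
With `τ_m(t) = 1 - (1 - m·t)^{1/m}`:
(i) for each `m ≥ 1`, `t ↦ τ_m(t)` is strictly increasing on `[0, 1/m]`; and
(ii) for each `n ≥ 1`, the difference
`τ_{n+1}(t) - τ_n(t) = (1 - n·t)^{1/n} - (1 - (n+1)·t)^{1/(n+1)}`
is strictly increasing on `[0, 1/(n+1))`. -/
theorem threshold_monotonicity :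
    (∀ m : ℕ, 1 ≤ m →
      StrictMonoOn (fun t : ℝ => 1 - (1 - (m : ℝ) * t) ^ ((1 : ℝ) / (m : ℝ)))
        (Set.Icc 0 (1 / (m : ℝ)))) ∧
    (∀ n : ℕ, 1 ≤ n →
      StrictMonoOn
        (fun t : ℝ => (1 - (n : ℝ) * t) ^ ((1 : ℝ) / (n : ℝ)) -
          (1 - ((n : ℝ) + 1) * t) ^ ((1 : ℝ) / ((n : ℝ) + 1)))
        (Set.Ico 0 (1 / ((n : ℝ) + 1)))) := by
  constructor
  · intro m hm s hs t ht hst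
    have hanti := strictAntiOn_one_sub_mul_rpow_one_div (c := m) (by exact_mod_cast hm)
    exact sub_lt_sub_left (hanti (Icc_subset_Iic_self hs) (Icc_subset_Iic_self ht) hst) 1
  · intro n hn
    exact strictMonoOn_one_sub_mul_rpow_one_div_sub (by exact_mod_cast hn) (lt_add_one _)
end
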